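/- For every integer n > 0, the prefix of u0 of length n contains strictly fewer occurrences of the letter c than the prefix of u1 of length n: |u0[:n]|_c < |u1[:n]|_c. -/
import Mathlib


/-- The alphabet `A = {a, b, c}`. -/
inductive A : Type
  | a | b | c
deriving DecidableEq, Repr

/-- The substitution `φ0 : a ↦ abc, b ↦ a, c ↦ ac`. -/
def phi0 : A → List A
  | A.a => [A.a, A.b, A.c]
  | A.b => [A.a]
  | A.c => [A.a, A.c]

/-- The substitution `φ1 : a ↦ cba, b ↦ a, c ↦ ca`. -/
def phi1 : A → List A
  | A.a => [A.c, A.b, A.a]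
  | A.b => [A.a]
  | A.c => [A.c, A.a]

/-- The action of a morphism (given by its values on letters) on finite words. -/
def applyMorphism {α β : Type*} (φ : α → List β) (l : List α) : List β :=
  l.flatMap φ

/-- The prefix `u[:n]` of length `n` of an infinite word `u`. -/
def pref {α : Type*} (u : ℕ → α) (n : ℕ) : List α :=
  (List.range n).map u

/-- A finite word `l` is a prefix of the infinite word `u`. -/
def PrefixOfSeq {α : Type*} (l : List α) (u : ℕ → α) : Prop :=
  ∀ i : ℕ, ∀ h : i < l.length, l.get ⟨i, h⟩ = u i

/-- The infinite word `u` is a (one-sided) fixed point of the substitution `φ`,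
i.e. `φ(u) = u`: the image of every prefix of `u` is again a prefix of `u`. -/
def IsFixedPointOf {α : Type*} (φ : α → List α) (u : ℕ → α) : Prop :=
  ∀ n : ℕ, PrefixOfSeq (applyMorphism φ (pref u n)) u

/- ======================  auxiliary development  ====================== -/

namespace CcLt

/-- The invariant relation between the letters `u0 n`, `u1 n` and the letter counts
of the prefixes of length `n`. -/
def rel : A → A → ℕ → ℕ → ℕ → ℕ → Prop
  | A.a, A.a, a0, c0, a1, c1 => (a0 = a1 + 1 ∧ c1 = c0 + 1) ∨ (a1 = a0 ∧ c1 = c0 + 1)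
  | A.a, A.b, a0, c0, a1, c1 => a1 = a0 ∧ c1 = c0 + 1
  | A.a, A.c, _, _, _, _ => False
  | A.b, A.a, a0, c0, a1, c1 => a0 = a1 + 1 ∧ c1 = c0 + 1
  | A.b, A.b, _, _, _, _ => False
  | A.b, A.c, a0, c0, a1, c1 => a0 = a1 + 1 ∧ c1 = c0 + 1
  | A.c, A.a, _, _, _, _ => False
  | A.c, A.b, a0, c0, a1, c1 => a0 = a1 + 1 ∧ c1 = c0 + 2
  | A.c, A.c, a0, c0, a1, c1 => (a0 = a1 + 1 ∧ c1 = c0 + 1) ∨ (a1 = a0 ∧ c1 = c0 + 1)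

lemma rel_c {x y : A} {a0 c0 a1 c1 : ℕ} (h : rel x y a0 c0 a1 c1) : c0 < c1 := by
  cases x <;> cases y <;> simp only [rel] at h <;> omega

lemma rel_E {x y : A} {a0 c0 a1 c1 : ℕ} (h : rel x y a0 c0 a1 c1) :
    2*a0 + c0 ≤ 2*a1 + c1 + 1 ∧ 2*a1 + c1 ≤ 2*a0 + c0 + 1 := by
  cases x <;> cases y <;> simp only [rel] at h <;> omega

/- basic facts about `pref` -/

lemma pref_length {α : Type*} (u : ℕ → α) (n : ℕ) : (pref u n).length = n := by
  simp [pref]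

lemma pref_zero {α : Type*} (u : ℕ → α) : pref u 0 = [] := rfl

lemma pref_succ {α : Type*} (u : ℕ → α) (n : ℕ) : pref u (n+1) = pref u n ++ [u n] := by
  simp [pref, List.range_succ]

lemma pref_getElem {α : Type*} (u : ℕ → α) (n i : ℕ) (h : i < (pref u n).length) :
    (pref u n)[i] = u i := by
  simp [pref]

lemma applyMorphism_append {α β : Type*} (φ : α → List β) (l₁ l₂ : List α) :
    applyMorphism φ (l₁ ++ l₂) = applyMorphism φ l₁ ++ applyMorphism φ l₂ := by
  simp [applyMorphism]

lemma applyMorphism_single {α β : Type*} (φ : α → List β) (x : α) :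
    applyMorphism φ [x] = φ x := by
  simp [applyMorphism]

/-- length of the image of the prefix of length `m`. -/
def Lf (φ : A → List A) (u : ℕ → A) (m : ℕ) : ℕ := (applyMorphism φ (pref u m)).length

lemma Lf_zero (φ : A → List A) (u : ℕ → A) : Lf φ u 0 = 0 := rfl

lemma Lf_succ (φ : A → List A) (u : ℕ → A) (m : ℕ) :
    Lf φ u (m+1) = Lf φ u m + (φ (u m)).length := by
  rw [Lf, pref_succ, applyMorphism_append, List.length_append, applyMorphism_single, Lf]

lemma Lf_mono {φ : A → List A} {u : ℕ → A} (hpos : ∀ x, 0 < (φ x).length)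
    {p q : ℕ} (h : p ≤ q) : Lf φ u p ≤ Lf φ u q := by
  induction q with
  | zero => simp_all
  | succ k ih =>
    rcases Nat.lt_or_ge p (k+1) with h' | h'
    · have := ih (by omega)
      rw [Lf_succ]
      have := hpos (u k)
      omega
    · have : p = k + 1 := by omega
      subst this; rfl

lemma exists_dec {φ : A → List A} {u : ℕ → A} (hpos : ∀ x, 0 < (φ x).length) (n : ℕ) :
    ∃ m r, n = Lf φ u m + r ∧ r < (φ (u m)).length := by
  induction n with
  | zero => exact ⟨0, 0, by simp [Lf_zero], hpos (u 0)⟩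
  | succ n ih =>
    obtain ⟨m, r, h1, h2⟩ := ih
    by_cases hc : r + 1 < (φ (u m)).length
    · exact ⟨m, r+1, by omega, hc⟩
    · exact ⟨m+1, 0, by rw [Lf_succ]; omega, hpos (u (m+1))⟩

lemma take_append_eq {α : Type*} (l₁ l₂ : List α) (r : ℕ) :
    (l₁ ++ l₂).take (l₁.length + r) = l₁ ++ l₂.take r := by
  induction l₁ with
  | nil => simp
  | cons x t ih =>
    rw [List.cons_append, List.length_cons]
    have h : t.length + 1 + r = (t.length + r) + 1 := by omega
    rw [h, List.take_succ_cons, ih, List.cons_append]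

section Fixed

variable {φ : A → List A} {u : ℕ → A}

lemma fixed_pref (hfix : IsFixedPointOf φ u) (m : ℕ) :
    pref u (Lf φ u m) = applyMorphism φ (pref u m) := by
  apply List.ext_get (by rw [pref_length]; rfl)
  intro i h1 h2
  rw [hfix m i h2, List.get_eq_getElem, pref_getElem]

lemma pref_take {α : Type*} (u : ℕ → α) {k K : ℕ} (h : k ≤ K) :
    pref u k = (pref u K).take k := by
  apply List.ext_get (by simp [pref_length]; omega)
  intro i h1 h2
  simp [pref]

lemma pref_decomp (hfix : IsFixedPointOf φ u) (m r : ℕ) (hr : r ≤ (φ (u m)).length) :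
    pref u (Lf φ u m + r) = applyMorphism φ (pref u m) ++ (φ (u m)).take r := by
  have h1 : Lf φ u m + r ≤ Lf φ u (m+1) := by rw [Lf_succ]; omega
  rw [pref_take u h1, fixed_pref hfix (m+1), pref_succ, applyMorphism_append,
    applyMorphism_single]
  exact take_append_eq _ _ r

lemma letter_at (hfix : IsFixedPointOf φ u) (m r : ℕ) (hr : r < (φ (u m)).length) :
    u (Lf φ u m + r) = (φ (u m)).get ⟨r, hr⟩ := by
  have h3 : applyMorphism φ (pref u (m+1)) = applyMorphism φ (pref u m) ++ φ (u m) := by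
    rw [pref_succ, applyMorphism_append, applyMorphism_single]
  have hlt : Lf φ u m + r < (applyMorphism φ (pref u (m+1))).length := by
    have := Lf_succ φ u m
    rw [Lf] at this
    rw [this]; omega
  rw [← hfix (m+1) (Lf φ u m + r) hlt]
  simp only [List.get_eq_getElem]
  have hle : (applyMorphism φ (pref u m)).length ≤ Lf φ u m + r := by
    rw [Lf]; omega
  rw [List.getElem_of_eq h3, List.getElem_append_right hle]
  congr 1
  rw [Lf]; omega

end Fixed

/- counting lemmas for the two substitutions -/

lemma phi0_cons (x : A) (t : List A) :
    applyMorphism phi0 (x :: t) = phi0 x ++ applyMorphism phi0 t := by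
  simp [applyMorphism]

lemma phi1_cons (x : A) (t : List A) :
    applyMorphism phi1 (x :: t) = phi1 x ++ applyMorphism phi1 t := by
  simp [applyMorphism]

lemma count_phi0_a (w : List A) : (applyMorphism phi0 w).count A.a = w.length := by
  induction w with
  | nil => rfl
  | cons x t ih =>
    rw [phi0_cons, List.count_append, ih]
    cases x <;> simp [phi0, List.count_cons] <;> omega

lemma count_phi0_c (w : List A) :
    (applyMorphism phi0 w).count A.c = w.count A.a + w.count A.c := by
  induction w with
  | nil => rfl
  | cons x t ih =>
    rw [phi0_cons, List.count_append, ih]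
    cases x <;> simp [phi0, List.count_cons] <;> omega

lemma len_phi0 (w : List A) :
    (applyMorphism phi0 w).length = w.length + 2 * w.count A.a + w.count A.c := by
  induction w with
  | nil => rfl
  | cons x t ih =>
    rw [phi0_cons, List.length_append, ih]
    cases x <;> simp [phi0, List.count_cons] <;> omega

lemma count_phi1_a (w : List A) : (applyMorphism phi1 w).count A.a = w.length := by
  induction w with
  | nil => rfl
  | cons x t ih =>
    rw [phi1_cons, List.count_append, ih]
    cases x <;> simp [phi1, List.count_cons] <;> omega

lemma count_phi1_c (w : List A) :
    (applyMorphism phi1 w).count A.c = w.count A.a + w.count A.c := by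
  induction w with
  | nil => rfl
  | cons x t ih =>
    rw [phi1_cons, List.count_append, ih]
    cases x <;> simp [phi1, List.count_cons] <;> omega

lemma len_phi1 (w : List A) :
    (applyMorphism phi1 w).length = w.length + 2 * w.count A.a + w.count A.c := by
  induction w with
  | nil => rfl
  | cons x t ih =>
    rw [phi1_cons, List.length_append, ih]
    cases x <;> simp [phi1, List.count_cons] <;> omega

lemma phi0_pos (x : A) : 0 < (phi0 x).length := by cases x <;> simp [phi0]
lemma phi1_pos (x : A) : 0 < (phi1 x).length := by cases x <;> simp [phi1]

lemma count_pref_succ (u : ℕ → A) (m : ℕ) (y : A) :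
    (pref u (m+1)).count y = (pref u m).count y + (if u m = y then 1 else 0) := by
  rw [pref_succ, List.count_append]
  congr 1
  cases h : u m <;> cases y <;> simp_all [List.count_cons]

/- ===== the three key combinatorial lemmas (pure case checking) ===== -/

lemma key0 (p0 p1 w0 w1 : A) (m a0 c0 a1 c1 A0n C0n A1n C1n r0 r1 : ℕ)
    (h : rel p0 p1 a0 c0 a1 c1)
    (hr0 : r0 < (phi0 p0).length) (hr1 : r1 < (phi1 p1).length)
    (hL : 2*a0 + c0 + r0 = 2*a1 + c1 + r1)
    (hw0 : w0 = (phi0 p0).get ⟨r0, hr0⟩) (hw1 : w1 = (phi1 p1).get ⟨r1, hr1⟩)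
    (hA0 : A0n = m + ((phi0 p0).take r0).count A.a)
    (hC0 : C0n = a0 + c0 + ((phi0 p0).take r0).count A.c)
    (hA1 : A1n = m + ((phi1 p1).take r1).count A.a)
    (hC1 : C1n = a1 + c1 + ((phi1 p1).take r1).count A.c) :
    rel w0 w1 A0n C0n A1n C1n := by
  subst hw0 hw1 hA0 hC0 hA1 hC1
  cases p0 <;> cases p1 <;> simp only [rel] at h <;>
    simp only [phi0, phi1, List.length_cons, List.length_nil] at hr0 hr1 <;>
    (interval_cases r0 <;> interval_cases r1 <;>
      simp_all [rel, phi0, phi1, List.count_cons] <;> omega)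

lemma key1 (p0 p1 q0 q1 w0 w1 : A) (m a0 c0 a1 c1 b0 d0 b1 d1 A0n C0n A1n C1n r0 r1 : ℕ)
    (h : rel p0 p1 a0 c0 a1 c1)
    (h' : rel q0 q1 b0 d0 b1 d1)
    (hb0 : b0 = a0 + (if p0 = A.a then 1 else 0)) (hd0 : d0 = c0 + (if p0 = A.c then 1 else 0))
    (hb1 : b1 = a1 + (if p1 = A.a then 1 else 0)) (hd1 : d1 = c1 + (if p1 = A.c then 1 else 0))
    (hr0 : r0 < (phi0 p0).length) (hr1 : r1 < (phi1 q1).length)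
    (hL : m + 2*a0 + c0 + r0 = (m+1) + 2*b1 + d1 + r1)
    (hw0 : w0 = (phi0 p0).get ⟨r0, hr0⟩) (hw1 : w1 = (phi1 q1).get ⟨r1, hr1⟩)
    (hA0 : A0n = m + ((phi0 p0).take r0).count A.a)
    (hC0 : C0n = a0 + c0 + ((phi0 p0).take r0).count A.c)
    (hA1 : A1n = (m+1) + ((phi1 q1).take r1).count A.a)
    (hC1 : C1n = b1 + d1 + ((phi1 q1).take r1).count A.c) :
    rel w0 w1 A0n C0n A1n C1n := by
  subst hw0 hw1 hA0 hC0 hA1 hC1 hb0 hd0 hb1 hd1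
  cases p0 <;> cases p1 <;> simp only [rel] at h <;>
    (cases q0 <;> cases q1 <;> simp only [rel, reduceIte] at h' <;>
      first
      | exact h'.elim
      | (simp only [phi0, phi1, List.length_cons, List.length_nil] at hr0 hr1 <;>
          interval_cases r0 <;> interval_cases r1 <;>
          simp_all [rel, phi0, phi1, List.count_cons] <;> omega))

lemma key2 (p0 p1 q0 q1 w0 w1 : A) (m a0 c0 a1 c1 b0 d0 b1 d1 A0n C0n A1n C1n r0 r1 : ℕ)
    (h : rel p0 p1 a0 c0 a1 c1)
    (h' : rel q0 q1 b0 d0 b1 d1)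
    (hb0 : b0 = a0 + (if p0 = A.a then 1 else 0)) (hd0 : d0 = c0 + (if p0 = A.c then 1 else 0))
    (hb1 : b1 = a1 + (if p1 = A.a then 1 else 0)) (hd1 : d1 = c1 + (if p1 = A.c then 1 else 0))
    (hr0 : r0 < (phi0 q0).length) (hr1 : r1 < (phi1 p1).length)
    (hL : (m+1) + 2*b0 + d0 + r0 = m + 2*a1 + c1 + r1)
    (hw0 : w0 = (phi0 q0).get ⟨r0, hr0⟩) (hw1 : w1 = (phi1 p1).get ⟨r1, hr1⟩)
    (hA0 : A0n = (m+1) + ((phi0 q0).take r0).count A.a)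
    (hC0 : C0n = b0 + d0 + ((phi0 q0).take r0).count A.c)
    (hA1 : A1n = m + ((phi1 p1).take r1).count A.a)
    (hC1 : C1n = a1 + c1 + ((phi1 p1).take r1).count A.c) :
    rel w0 w1 A0n C0n A1n C1n := by
  subst hw0 hw1 hA0 hC0 hA1 hC1 hb0 hd0 hb1 hd1
  cases p0 <;> cases p1 <;> simp only [rel] at h <;>
    (cases q0 <;> cases q1 <;> simp only [rel, reduceIte] at h' <;>
      first
      | exact h'.elim
      | (simp only [phi0, phi1, List.length_cons, List.length_nil] at hr0 hr1 <;>
          interval_cases r0 <;> interval_cases r1 <;>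
          simp_all [rel, phi0, phi1, List.count_cons] <;> omega))

end CcLt

open CcLt

/-- For every `n > 0`, the prefix of `u0` of length `n` contains strictly fewer
occurrences of the letter `c` than the prefix of `u1` of length `n`. -/
theorem count_c_lt
    (u0 u1 : ℕ → A)
    (hu0 : u0 0 = A.a) (hfix0 : IsFixedPointOf phi0 u0)
    (hu1 : u1 0 = A.c) (hfix1 : IsFixedPointOf phi1 u1) :
    ∀ n : ℕ, 0 < n → (pref u0 n).count A.c < (pref u1 n).count A.c := by
  suffices H : ∀ n : ℕ, 0 < n → rel (u0 n) (u1 n) ((pref u0 n).count A.a)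
      ((pref u0 n).count A.c) ((pref u1 n).count A.a) ((pref u1 n).count A.c) by
    intro n hn; exact rel_c (H n hn)
  have e1 : pref u0 1 = [A.a] := by rw [pref_succ, pref_zero, hu0]; rfl
  have f1 : pref u1 1 = [A.c] := by rw [pref_succ, pref_zero, hu1]; rfl
  have hL0one : Lf phi0 u0 1 = 3 := by rw [Lf, e1]; rfl
  have hL1one : Lf phi1 u1 1 = 2 := by rw [Lf, f1]; rfl
  have q3 : pref u0 3 = [A.a, A.b, A.c] := by
    have h := fixed_pref hfix0 1
    rw [hL0one, e1] at h
    simpa [applyMorphism, phi0] using h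
  have hu01 : u0 1 = A.b := by
    have h := pref_getElem u0 3 1 (by rw [q3]; simp)
    simp only [q3] at h
    simpa using h.symm
  have hu02 : u0 2 = A.c := by
    have h := pref_getElem u0 3 2 (by rw [q3]; simp)
    simp only [q3] at h
    simpa using h.symm
  have f2 : pref u1 2 = [A.c, A.a] := by
    have h := fixed_pref hfix1 1
    rw [hL1one, f1] at h
    simpa [applyMorphism, phi1] using h
  have hu11 : u1 1 = A.a := by
    have h := pref_getElem u1 2 1 (by rw [f2]; simp)
    simp only [f2] at h
    simpa using h.symm
  have hL1two : Lf phi1 u1 2 = 5 := by rw [Lf_succ, hL1one, hu11]; rfl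
  have f5 : pref u1 5 = [A.c, A.a, A.c, A.b, A.a] := by
    have h := fixed_pref hfix1 2
    rw [hL1two, f2] at h
    simpa [applyMorphism, phi1] using h
  have hu12 : u1 2 = A.c := by
    have h := pref_getElem u1 5 2 (by rw [f5]; simp)
    simp only [f5] at h
    simpa using h.symm
  have e2 : pref u0 2 = [A.a, A.b] := by rw [pref_succ, e1, hu01]; rfl
  have inv_one : rel (u0 1) (u1 1) ((pref u0 1).count A.a) ((pref u0 1).count A.c)
      ((pref u1 1).count A.a) ((pref u1 1).count A.c) := by
    rw [hu01, hu11, e1, f1]; simp [rel, List.count_cons]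
  have inv_two : rel (u0 2) (u1 2) ((pref u0 2).count A.a) ((pref u0 2).count A.c)
      ((pref u1 2).count A.a) ((pref u1 2).count A.c) := by
    rw [hu02, hu12, e2, f2]; simp [rel, List.count_cons]
  have low0 : ∀ m, 1 ≤ m → m + 2 ≤ Lf phi0 u0 m := by
    intro m hm
    induction m with
    | zero => omega
    | succ k ih =>
      rcases Nat.eq_zero_or_pos k with hk | hk
      · subst hk; rw [hL0one]
      · have h1 := ih hk
        rw [Lf_succ]
        have := phi0_pos (u0 k)
        omega
  have low1 : ∀ m, 1 ≤ m → m + 1 ≤ Lf phi1 u1 m := by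
    intro m hm
    induction m with
    | zero => omega
    | succ k ih =>
      rcases Nat.eq_zero_or_pos k with hk | hk
      · subst hk; rw [hL1one]
      · have h1 := ih hk
        rw [Lf_succ]
        have := phi1_pos (u1 k)
        omega
  have hLf0 : ∀ m, Lf phi0 u0 m = m + 2 * (pref u0 m).count A.a + (pref u0 m).count A.c := by
    intro m; rw [Lf, len_phi0, pref_length]
  have hLf1 : ∀ m, Lf phi1 u1 m = m + 2 * (pref u1 m).count A.a + (pref u1 m).count A.c := by
    intro m; rw [Lf, len_phi1, pref_length]
  intro n
  induction n using Nat.strong_induction_on with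
  | _ n IH =>
  intro hn
  obtain ⟨m0, r0, hn0, hr0⟩ := exists_dec (φ := phi0) (u := u0) phi0_pos n
  obtain ⟨m1, r1, hn1, hr1⟩ := exists_dec (φ := phi1) (u := u1) phi1_pos n
  rcases Nat.eq_zero_or_pos m0 with hm0 | hm0
  · subst hm0
    rw [Lf_zero] at hn0
    rw [hu0] at hr0
    simp only [phi0, List.length_cons, List.length_nil] at hr0
    have hn3 : n < 3 := by omega
    interval_cases n
    · exact inv_one
    · exact inv_two
  rcases Nat.eq_zero_or_pos m1 with hm1 | hm1
  · subst hm1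
    rw [Lf_zero] at hn1
    rw [hu1] at hr1
    simp only [phi1, List.length_cons, List.length_nil] at hr1
    have : n = 1 := by omega
    subst this
    exact inv_one
  have hm0n : m0 + 1 < n := by have := low0 m0 hm0; omega
  have hm1n : m1 < n := by have := low1 m1 hm1; omega
  have inv0 := IH m0 (by omega) hm0
  have inv1 := IH m1 (by omega) hm1
  have hw0 : u0 n = (phi0 (u0 m0)).get ⟨r0, hr0⟩ := by
    rw [hn0]; exact letter_at hfix0 m0 r0 hr0
  have hw1 : u1 n = (phi1 (u1 m1)).get ⟨r1, hr1⟩ := by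
    rw [hn1]; exact letter_at hfix1 m1 r1 hr1
  have hA0 : (pref u0 n).count A.a = m0 + ((phi0 (u0 m0)).take r0).count A.a := by
    rw [hn0, pref_decomp hfix0 m0 r0 (le_of_lt hr0), List.count_append, count_phi0_a,
      pref_length]
  have hC0 : (pref u0 n).count A.c
      = (pref u0 m0).count A.a + (pref u0 m0).count A.c
        + ((phi0 (u0 m0)).take r0).count A.c := by
    rw [hn0, pref_decomp hfix0 m0 r0 (le_of_lt hr0), List.count_append, count_phi0_c]
  have hA1 : (pref u1 n).count A.a = m1 + ((phi1 (u1 m1)).take r1).count A.a := by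
    rw [hn1, pref_decomp hfix1 m1 r1 (le_of_lt hr1), List.count_append, count_phi1_a,
      pref_length]
  have hC1 : (pref u1 n).count A.c
      = (pref u1 m1).count A.a + (pref u1 m1).count A.c
        + ((phi1 (u1 m1)).take r1).count A.c := by
    rw [hn1, pref_decomp hfix1 m1 r1 (le_of_lt hr1), List.count_append, count_phi1_c]
  have ht1 : m1 ≤ m0 + 1 := by
    by_contra hcon
    push_neg at hcon
    have hk := IH (m1 - 1) (by omega) (by omega)
    have hE := (rel_E hk).1
    have h5 : n < Lf phi0 u0 (m0+1) := by rw [Lf_succ]; omega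
    have h6 : Lf phi0 u0 (m0+1) ≤ Lf phi0 u0 (m1-1) := Lf_mono phi0_pos (by omega)
    have h7 : Lf phi0 u0 (m1-1) ≤ Lf phi1 u1 (m1-1) + 1 := by
      rw [hLf0, hLf1]; omega
    have h8 : Lf phi1 u1 (m1-1) + 1 ≤ Lf phi1 u1 m1 := by
      have hm1e : m1 - 1 + 1 = m1 := by omega
      have h9 := Lf_succ phi1 u1 (m1-1)
      rw [hm1e] at h9
      have := phi1_pos (u1 (m1-1))
      omega
    omega
  have ht2 : m0 ≤ m1 + 1 := by
    by_contra hcon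
    push_neg at hcon
    have hk := IH (m0 - 1) (by omega) (by omega)
    have hE := (rel_E hk).2
    have h5 : n < Lf phi1 u1 (m1+1) := by rw [Lf_succ]; omega
    have h6 : Lf phi1 u1 (m1+1) ≤ Lf phi1 u1 (m0-1) := Lf_mono phi1_pos (by omega)
    have h7 : Lf phi1 u1 (m0-1) ≤ Lf phi0 u0 (m0-1) + 1 := by
      rw [hLf0, hLf1]; omega
    have h8 : Lf phi0 u0 (m0-1) + 1 ≤ Lf phi0 u0 m0 := by
      have hm0e : m0 - 1 + 1 = m0 := by omega
      have h9 := Lf_succ phi0 u0 (m0-1)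
      rw [hm0e] at h9
      have := phi0_pos (u0 (m0-1))
      omega
    omega
  have htri : m1 = m0 ∨ m1 = m0 + 1 ∨ m0 = m1 + 1 := by omega
  rcases htri with he | he | he
  · subst he
    exact key0 (u0 m1) (u1 m1) (u0 n) (u1 n) m1 _ _ _ _ _ _ _ _ r0 r1 inv0 hr0 hr1
      (by have h1 := hLf0 m1; have h2 := hLf1 m1; omega) hw0 hw1 hA0 hC0 hA1 hC1
  · subst he
    exact key1 (u0 m0) (u1 m0) (u0 (m0+1)) (u1 (m0+1)) (u0 n) (u1 n) m0
      _ _ _ _ _ _ _ _ _ _ _ _ r0 r1 inv0 inv1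
      (count_pref_succ u0 m0 A.a) (count_pref_succ u0 m0 A.c)
      (count_pref_succ u1 m0 A.a) (count_pref_succ u1 m0 A.c) hr0 hr1
      (by have h1 := hLf0 m0; have h2 := hLf1 (m0+1); omega) hw0 hw1 hA0 hC0 hA1 hC1
  · subst he
    exact key2 (u0 m1) (u1 m1) (u0 (m1+1)) (u1 (m1+1)) (u0 n) (u1 n) m1
      _ _ _ _ _ _ _ _ _ _ _ _ r0 r1 inv1 inv0
      (count_pref_succ u0 m1 A.a) (count_pref_succ u0 m1 A.c)
      (count_pref_succ u1 m1 A.a) (count_pref_succ u1 m1 A.c) hr0 hr1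
      (by have h1 := hLf0 (m1+1); have h2 := hLf1 m1; omega) hw0 hw1 hA0 hC0 hA1 hC1
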